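/- Let (P, m, 1_P, R) be a Rota-Baxter species of weight λ. Then the full Fock space F(P) = ⊕_{n≥0} P[n̲] (where n̲ = {1,…,n}), equipped with the product x·y = P[σ_{m,n}](m_{m̲,n̲}(x ⊗ y)) for x ∈ P[m̲], y ∈ P[n̲] (where σ_{m,n}: m̲ ⊔ n̲ → (m+n)̲ sends i ∈ m̲ to i and i ∈ n̲ to i+m), unit 1_P, and the operator P_F defined by P_F(x) = R_{n̲}(x) for x ∈ P[n̲], is a graded Rota-Baxter algebra of weight λ: F(P) is a graded associative unital k-algebra with F(P)_n = P[n̲], P_F preserves each graded component, and P_F(x)·P_F(y) = P_F( P_F(x)·y + x·P_F(y) + λ·x·y ) for all x, y ∈ F(P). -/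
import Mathlib


/-- A Rota-Baxter species of weight `lam` over `k`: a (vector) species `obj` with structure
maps `map σ` for bijections `σ` of finite sets, equivariant associative multiplications
`mul : P[X] ⊗ P[Y] → P[X ⊔ Y]`, a unit `one ∈ P[∅]`, and a morphism of species
`R : P → P` satisfying the Rota-Baxter identity of weight `lam`. -/
structure RBSpecies (k : Type) [Field k] (lam : k) : Type 1 where
  /-- the value of the species on a finite set -/
  obj : (X : Type) → [Fintype X] → ModuleCat.{0} k
  /-- the value of the species on a bijection -/
  map : {X Y : Type} → [Fintype X] → [Fintype Y] → (X ≃ Y) → (obj X →ₗ[k] obj Y)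
  map_id : ∀ (X : Type) [Fintype X], map (Equiv.refl X) = LinearMap.id
  map_comp : ∀ {X Y Z : Type} [Fintype X] [Fintype Y] [Fintype Z] (σ : X ≃ Y) (τ : Y ≃ Z),
    map (σ.trans τ) = (map τ).comp (map σ)
  /-- the multiplication `m_{X,Y}` -/
  mul : {X Y : Type} → [Fintype X] → [Fintype Y] → (obj X →ₗ[k] obj Y →ₗ[k] obj (X ⊕ Y))
  /-- the unit `1 ∈ P[∅]` -/
  one : obj Empty
  mul_natural : ∀ {X X' Y Y' : Type} [Fintype X] [Fintype X'] [Fintype Y] [Fintype Y']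
      (σ : X ≃ X') (τ : Y ≃ Y') (x : obj X) (y : obj Y),
      map (σ.sumCongr τ) (mul x y) = mul (map σ x) (map τ y)
  mul_assoc' : ∀ {X Y Z : Type} [Fintype X] [Fintype Y] [Fintype Z]
      (x : obj X) (y : obj Y) (z : obj Z),
      map (Equiv.sumAssoc X Y Z) (mul (mul x y) z) = mul x (mul y z)
  one_mul' : ∀ {X : Type} [Fintype X] (x : obj X),
      map (Equiv.emptySum Empty X) (mul one x) = x
  mul_one' : ∀ {X : Type} [Fintype X] (x : obj X),
      map (Equiv.sumEmpty X Empty) (mul x one) = x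
  /-- the Rota-Baxter operator -/
  R : {X : Type} → [Fintype X] → (obj X →ₗ[k] obj X)
  R_natural : ∀ {X Y : Type} [Fintype X] [Fintype Y] (σ : X ≃ Y) (x : obj X),
      map σ (R x) = R (map σ x)
  rb : ∀ {X Y : Type} [Fintype X] [Fintype Y] (x : obj X) (y : obj Y),
      mul (R x) (R y) = R (mul (R x) y + mul x (R y) + lam • mul x y)

/-- The product of the full Fock space `F(P) = ⊕ₙ P[n̲]` of a Rota-Baxter species `P`,
on homogeneous components: `x · y = P[σ_{m,n}](m_{m̲,n̲}(x ⊗ y))`, where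
`σ_{m,n} : m̲ ⊔ n̲ ≃ (m+n)̲` is the canonical bijection (`finSumFinEquiv`). -/
noncomputable def RBSpecies.fmul {k : Type} [Field k] {lam : k} (P : RBSpecies k lam)
    {m n : ℕ} (x : P.obj (Fin m)) (y : P.obj (Fin n)) : P.obj (Fin (m + n)) :=
  P.map finSumFinEquiv (P.mul x y)

/-- The unit of the full Fock space, i.e. `1_P ∈ P[∅] = P[0̲]`. -/
noncomputable def RBSpecies.fone {k : Type} [Field k] {lam : k} (P : RBSpecies k lam) :
    P.obj (Fin 0) :=
  P.map (Equiv.equivEmpty (Fin 0)).symm P.one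


section Aux
variable {k : Type} [Field k] {lam : k} (P : RBSpecies k lam)

lemma RBSpecies.map_map {X Y Z : Type} [Fintype X] [Fintype Y] [Fintype Z]
    (σ : X ≃ Y) (τ : Y ≃ Z) (x : P.obj X) :
    P.map τ (P.map σ x) = P.map (σ.trans τ) x := by
  rw [P.map_comp]; rfl

lemma RBSpecies.map_congr {X Y : Type} [Fintype X] [Fintype Y]
    {σ τ : X ≃ Y} (h : σ = τ) (x : P.obj X) : P.map σ x = P.map τ x := by rw [h]

lemma RBSpecies.map_refl {X : Type} [Fintype X] (x : P.obj X) :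
    P.map (Equiv.refl X) x = x := by rw [P.map_id]; rfl

end Aux

/-- for a Rota-Baxter species `(P, m, 1_P, R)` of weight `λ`, the full Fock
space `F(P) = ⊕_{n≥0} P[n̲]` with the product `x·y = P[σ_{m,n}](m(x ⊗ y))`, unit `1_P`, and
operator `P_F = R` on each graded component, is a graded Rota-Baxter algebra of weight `λ`:
the product is (graded) associative and unitary, `P_F` preserves the graded components (by
construction), and `P_F(x)·P_F(y) = P_F(P_F(x)·y + x·P_F(y) + λ·x·y)`. -/
theorem fock_graded_rota_baxter {k : Type} [Field k] (lam : k) (P : RBSpecies k lam) :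
    -- graded associativity
    (∀ (m n p : ℕ) (x : P.obj (Fin m)) (y : P.obj (Fin n)) (z : P.obj (Fin p)),
        P.fmul (P.fmul x y) z =
          P.map (finCongr (Nat.add_assoc m n p).symm) (P.fmul x (P.fmul y z)))
    ∧
    -- `1_P` is a two-sided unit
    (∀ (n : ℕ) (x : P.obj (Fin n)),
        P.fmul P.fone x = P.map (finCongr (Nat.zero_add n).symm) x
        ∧ P.fmul x P.fone = P.map (finCongr (Nat.add_zero n).symm) x)
    ∧
    -- the Rota-Baxter identity of weight `λ` for `P_F`
    (∀ (m n : ℕ) (x : P.obj (Fin m)) (y : P.obj (Fin n)),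
        P.fmul (P.R x) (P.R y) =
          P.R (P.fmul (P.R x) y + P.fmul x (P.R y) + lam • P.fmul x y)) := by
  refine ⟨?_, ?_, ?_⟩
  · intro m n p x y z
    unfold RBSpecies.fmul
    have h1 : P.mul (P.map finSumFinEquiv (P.mul x y)) z
        = P.map (finSumFinEquiv.sumCongr (Equiv.refl (Fin p))) (P.mul (P.mul x y) z) := by
      rw [P.mul_natural, P.map_refl]
    have h2 : P.mul x (P.map finSumFinEquiv (P.mul y z))
        = P.map ((Equiv.refl (Fin m)).sumCongr finSumFinEquiv) (P.mul x (P.mul y z)) := by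
      rw [P.mul_natural, P.map_refl]
    rw [h1, h2, ← P.mul_assoc', P.map_map, P.map_map, P.map_map, P.map_map]
    apply P.map_congr
    ext i
    rcases i with (i | i) | i <;> simp [Fin.ext_iff] <;> omega
  · intro n x
    constructor
    · unfold RBSpecies.fmul RBSpecies.fone
      have h1 : P.mul (P.map (Equiv.equivEmpty (Fin 0)).symm P.one) x
          = P.map (((Equiv.equivEmpty (Fin 0)).symm).sumCongr (Equiv.refl (Fin n)))
              (P.mul P.one x) := by
        rw [P.mul_natural, P.map_refl]
      have h2 : P.mul P.one x = P.map (Equiv.emptySum Empty (Fin n)).symm x := by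
        have h := congrArg (P.map (Equiv.emptySum Empty (Fin n)).symm) (P.one_mul' x)
        rwa [P.map_map, Equiv.self_trans_symm, P.map_refl] at h
      rw [h1, h2, P.map_map, P.map_map]
      apply P.map_congr
      ext i
      simp [Fin.ext_iff]
    · unfold RBSpecies.fmul RBSpecies.fone
      have h1 : P.mul x (P.map (Equiv.equivEmpty (Fin 0)).symm P.one)
          = P.map ((Equiv.refl (Fin n)).sumCongr ((Equiv.equivEmpty (Fin 0)).symm))
              (P.mul x P.one) := by
        rw [P.mul_natural, P.map_refl]
      have h2 : P.mul x P.one = P.map (Equiv.sumEmpty (Fin n) Empty).symm x := by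
        have h := congrArg (P.map (Equiv.sumEmpty (Fin n) Empty).symm) (P.mul_one' x)
        rwa [P.map_map, Equiv.self_trans_symm, P.map_refl] at h
      rw [h1, h2, P.map_map, P.map_map]
      apply P.map_congr
      ext i
      simp [Fin.ext_iff, finSumFinEquiv]
  · intro m n x y
    unfold RBSpecies.fmul
    rw [P.rb, P.R_natural]
    congr 1
    rw [map_add, map_add, map_smul]
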